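/- arXiv:2303.10866 — 2 statements merged into one kernel-verified Lean document; each statement's English description precedes it below -/
import Mathlib

section
/- Let D be a finite directed graph, S_min a minimal knot-free vertex deletion set with sink set Z_min, and x ∈ Z_min. Define D' = D - R(x), where R(x) = N^+(x) ∪ R^-(x). Then S_min \ N^+(x) is a knot-free vertex deletion set of D'. -/
open Relation Set

variable {V : Type*}

/-- Arcs of the induced subgraph of the digraph `A` after deleting the vertex set `S`. -/
def delArcs (A : V → V → Prop) (S : Set V) : V → V → Prop :=
  fun u v => u ∉ S ∧ v ∉ S ∧ A u v

/-- `K` is a knot of the digraph `A`: a strongly connected component of size at least 2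
with no arc leaving it.  (A strongly connected set that is closed under out-arcs is
automatically a maximal strongly connected set, i.e. a strongly connected component.) -/
def IsKnot (A : V → V → Prop) (K : Set V) : Prop :=
  2 ≤ K.ncard ∧ (∀ u ∈ K, ∀ v ∈ K, Relation.ReflTransGen A u v) ∧
    (∀ u ∈ K, ∀ v, A u v → v ∈ K)

/-- A digraph is knot-free if it contains no knot. -/
def KnotFree (A : V → V → Prop) : Prop := ¬ ∃ K : Set V, IsKnot A K

/-- `S` is a knot-free vertex deletion set of the digraph `A`. -/
def IsKFVDS (A : V → V → Prop) (S : Set V) : Prop := KnotFree (delArcs A S)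

/-- `S` is an inclusion-wise minimal knot-free vertex deletion set. -/
def MinimalKFVDS (A : V → V → Prop) (S : Set V) : Prop :=
  IsKFVDS A S ∧ ∀ S' : Set V, S' ⊂ S → ¬ IsKFVDS A S'

/-- `S` is a minimum-size knot-free vertex deletion set. -/
def MinimumKFVDS (A : V → V → Prop) (S : Set V) : Prop :=
  IsKFVDS A S ∧ ∀ S' : Set V, IsKFVDS A S' → S.ncard ≤ S'.ncard

/-- `v` is a sink of the induced subgraph `D - S`. -/
def IsSinkIn (A : V → V → Prop) (S : Set V) (v : V) : Prop :=
  v ∉ S ∧ ∀ w, ¬ delArcs A S v w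

/-- The set of sinks of `D - S`. -/
def sinksIn (A : V → V → Prop) (S : Set V) : Set V := {v | IsSinkIn A S v}

/-- `N^+(x)`, the out-neighborhood of `x`. -/
def outNbrs (A : V → V → Prop) (x : V) : Set V := {v | A x v}

/-- `R^-(x)` : the set of vertices (including `x`) with a directed path to `x`
in `D - N^+(x)`. -/
def RminusSet (A : V → V → Prop) (x : V) : Set V :=
  {u | Relation.ReflTransGen (delArcs A (outNbrs A x)) u x}

/-- `R(x) = N^+(x) ∪ R^-(x)`. -/
def Rset (A : V → V → Prop) (x : V) : Set V := outNbrs A x ∪ RminusSet A x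

/-!
Since `x` is a sink of `D - S_min`, its out-neighbourhood lies in `S_min`, so
`D' - (S_min \ N^+(x))` is just `D - (S_min ∪ R(x))`. Outside `R(x)` no arc of `D - S_min`
enters `R(x)`: it cannot enter `N^+(x) ⊆ S_min`, and entering `R^-(x)` would put its tail into
`R^-(x)` as well. Hence a knot of `D - (S_min ∪ R(x))` has no arc leaving it in `D - S_min`
either, and is a knot there, contradicting that `S_min` is a knot-free vertex deletion set.
-/

variable {A : V → V → Prop}

theorem delArcs_delArcs (S T : Set V) :
    delArcs (delArcs A S) T = delArcs A (S ∪ T) := by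
  funext u v
  apply propext
  simp only [delArcs, mem_union, not_or]
  tauto

theorem IsKnot.exists_arc {K : Set V} (hK : IsKnot A K) {u : V} (hu : u ∈ K) : ∃ v, A u v := by
  obtain ⟨w, hw, hwu⟩ := exists_ne_of_one_lt_ncard hK.1 u
  rcases (hK.2.1 u hu w hw).cases_head with h | ⟨v, huv, -⟩
  · exact absurd h.symm hwu
  · exact ⟨v, huv⟩

theorem IsKnot.notMem_of_delArcs {S K : Set V} (hK : IsKnot (delArcs A S) K) {u : V}
    (hu : u ∈ K) : u ∉ S :=
  (hK.exists_arc hu).choose_spec.1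

theorem IsKnot.of_delArcs_union {S T K : Set V} (hK : IsKnot (delArcs A (S ∪ T)) K)
    (hT : ∀ u v, u ∉ T → delArcs A S u v → v ∉ T) : IsKnot (delArcs A S) K := by
  have hle : ∀ u v, delArcs A (S ∪ T) u v → delArcs A S u v :=
    fun u v ⟨hu, hv, huv⟩ => ⟨fun h => hu (Or.inl h), fun h => hv (Or.inl h), huv⟩
  refine ⟨hK.1, fun u hu v hv => ReflTransGen.mono hle _ _ (hK.2.1 u hu v hv),
    fun u hu v huv => ?_⟩
  have huST := hK.notMem_of_delArcs hu
  have huT : u ∉ T := fun h => huST (Or.inr h)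
  have hvT := hT u v huT huv
  exact hK.2.2 u hu v ⟨huST, fun h => h.elim huv.2.1 hvT, huv.2.2⟩

theorem outNbrs_subset_of_mem_sinksIn {S : Set V} {x : V} (hx : x ∈ sinksIn A S) :
    outNbrs A x ⊆ S := fun v hv => by_contra fun hvS => hx.2 v ⟨hx.1, hvS, hv⟩

theorem notMem_Rset_of_delArcs {S : Set V} {x u v : V} (hx : x ∈ sinksIn A S)
    (hu : u ∉ Rset A x) (huv : delArcs A S u v) : v ∉ Rset A x := by
  have hN := outNbrs_subset_of_mem_sinksIn hx
  have hvN : v ∉ outNbrs A x := fun h => huv.2.1 (hN h)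
  rintro (hv | hv)
  · exact hvN hv
  · exact hu (Or.inr (hv.head ⟨fun h => hu (Or.inl h), hvN, huv.2.2⟩))

theorem stmt8_general (A : V → V → Prop) (Smin : Set V)
    (hS : MinimalKFVDS A Smin) (x : V) (hx : x ∈ sinksIn A Smin) :
    IsKFVDS (delArcs A (Rset A x)) (Smin \ outNbrs A x) := by
  have hN := outNbrs_subset_of_mem_sinksIn hx
  have hdel : delArcs (delArcs A (Rset A x)) (Smin \ outNbrs A x) =
      delArcs A (Smin ∪ Rset A x) := by
    rw [delArcs_delArcs]
    congr 1
    ext v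
    simp only [Rset, mem_union, mem_sdiff]
    tauto
  rintro ⟨K, hK⟩
  rw [hdel] at hK
  exact hS.1 ⟨K, hK.of_delArcs_union fun _ _ hu huv => notMem_Rset_of_delArcs hx hu huv⟩

/-- If `x` is a sink of `D - S_min` for a minimal knot-free vertex
deletion set `S_min`, then `S_min \ N^+(x)` is a knot-free vertex deletion set of
`D' = D - R(x)`. -/
theorem stmt8 [Fintype V] (A : V → V → Prop) (Smin : Set V)
    (hS : MinimalKFVDS A Smin) (x : V) (hx : x ∈ sinksIn A Smin) :
    IsKFVDS (delArcs A (Rset A x)) (Smin \ outNbrs A x) :=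
  stmt8_general A Smin hS x hx
end

section
/- Let D be a finite directed graph and x a vertex of D. Let D' = D - R(x) where R(x) = N^+(x) ∪ R^-(x). If S' is a knot-free vertex deletion set of D', then S' ∪ N^+(x) is a knot-free vertex deletion set of D. -/
/-!
Let `K` be a knot of `D - (S' ∪ N⁺(x))`. A knot has at least two vertices and is strongly
connected, so each of its vertices has an out-arc inside it; hence `x ∉ K`, since all arcs of `x`
end in `N⁺(x)`. A path of `D - N⁺(x)` from a vertex of `K` to `x` avoids `S'` (it runs in
`R⁻(x)`), so it would stay in the out-closed set `K` and bring `x` into `K`. Thus `K` misses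
`R(x)`, the arcs leaving `K` are the same in `D - (S' ∪ N⁺(x))` and in `D' - S'`, and `K` is a
knot of `D' - S'`.
-/

open Relation Set

variable {V : Type*}

namespace IsKnot

variable {A B : V → V → Prop} {K S : Set V} {u v x : V}

theorem exists_arc_s9 (hK : IsKnot A K) (hu : u ∈ K) : ∃ v, A u v := by
  obtain ⟨w, hw, hwu⟩ := exists_ne_of_one_lt_ncard hK.1 u
  rcases (hK.2.1 u hu w hw).cases_head with rfl | ⟨v, huv, -⟩
  · exact (hwu rfl).elim
  · exact ⟨v, huv⟩

theorem notMem_of_delArcs_s9 (hK : IsKnot (delArcs A S) K) (hu : u ∈ K) : u ∉ S :=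
  let ⟨_, huv⟩ := hK.exists_arc_s9 hu
  huv.1

theorem notMem_of_outNbrs_subset (hK : IsKnot (delArcs A S) K) (hx : outNbrs A x ⊆ S) :
    x ∉ K := fun hxK =>
  let ⟨_, hxv⟩ := hK.exists_arc_s9 hxK
  hxv.2.1 (hx hxv.2.2)

theorem mem_of_reflTransGen (hK : IsKnot A K) (hu : u ∈ K) (h : ReflTransGen A u v) : v ∈ K := by
  induction h with
  | refl => exact hu
  | tail _ hbc ih => exact hK.2.2 _ ih _ hbc

theorem of_forall_mem_arc_iff (hK : IsKnot A K) (hAB : ∀ u ∈ K, ∀ v, A u v ↔ B u v) :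
    IsKnot B K := by
  refine ⟨hK.1, fun u hu v hv => ?_, fun u hu v huv => hK.2.2 u hu v ((hAB u hu v).2 huv)⟩
  have hpath : ∀ w, ReflTransGen A u w → ReflTransGen B u w := by
    intro w h
    induction h with
    | refl => rfl
    | tail hub hbc ih => exact ih.tail ((hAB _ (hK.mem_of_reflTransGen hu hub) _).1 hbc)
  exact hpath v (hK.2.1 u hu v hv)

theorem mem_of_mem_RminusSet {S' : Set V} (hsub : Disjoint S' (Rset A x))
    (hK : IsKnot (delArcs A (S' ∪ outNbrs A x)) K) (hu : u ∈ K) (hux : u ∈ RminusSet A x) :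
    x ∈ K := by
  induction hux using ReflTransGen.head_induction_on with
  | refl => exact hu
  | head hab hbx ih =>
    refine ih (hK.2.2 _ hu _ ⟨hK.notMem_of_delArcs_s9 hu, ?_, hab.2.2⟩)
    rintro (hbS | hbN)
    · exact disjoint_left.1 hsub hbS (Or.inr hbx)
    · exact hab.2.1 hbN

theorem disjoint_Rset {S' : Set V} (hsub : Disjoint S' (Rset A x))
    (hK : IsKnot (delArcs A (S' ∪ outNbrs A x)) K) : Disjoint K (Rset A x) := by
  have hx : x ∉ K := hK.notMem_of_outNbrs_subset subset_union_right
  refine disjoint_left.2 fun u hu => ?_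
  rintro (hN | hR)
  · exact hK.notMem_of_delArcs_s9 hu (Or.inr hN)
  · exact hx (hK.mem_of_mem_RminusSet hsub hu hR)

end IsKnot

theorem stmt9_general (A : V → V → Prop) (x : V) (S' : Set V)
    (hsub : Disjoint S' (Rset A x))
    (hS' : IsKFVDS (delArcs A (Rset A x)) S') :
    IsKFVDS A (S' ∪ outNbrs A x) := by
  rintro ⟨K, hK⟩
  have hKR : ∀ u ∈ K, u ∉ Rset A x := fun u hu => disjoint_left.1 (hK.disjoint_Rset hsub) hu
  refine hS' ⟨K, hK.of_forall_mem_arc_iff fun u hu v => ⟨fun huv => ?_, fun huv => ?_⟩⟩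
  · have hv : v ∈ K := hK.2.2 u hu v huv
    exact ⟨fun h => huv.1 (Or.inl h), fun h => huv.2.1 (Or.inl h), hKR u hu, hKR v hv, huv.2.2⟩
  · obtain ⟨huS, hvS, huR, hvR, huv⟩ := huv
    exact ⟨not_or.2 ⟨huS, fun h => huR (Or.inl h)⟩, not_or.2 ⟨hvS, fun h => hvR (Or.inl h)⟩, huv⟩

/-- If `S'` is a knot-free vertex deletion set of `D' = D - R(x)`
(so `S'` consists of vertices of `D'`), then `S' ∪ N^+(x)` is a knot-free vertex
deletion set of `D`. -/
theorem stmt9 [Fintype V] (A : V → V → Prop) (x : V) (S' : Set V)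
    (hsub : Disjoint S' (Rset A x))
    (hS' : IsKFVDS (delArcs A (Rset A x)) S') :
    IsKFVDS A (S' ∪ outNbrs A x) :=
  stmt9_general A x S' hsub hS'
end
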